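/- Let R := max_{i∈[n]} ‖a_i‖, let μ > 0, let θ̂* ∈ ℝ^d be a unit vector with y_i a_iᵀθ̂* ≥ μ for all i ∈ [n], let γ > 0, and set α := (2 log(2n − 1)/γ + R²)/μ. If θ ∈ ℝ^d is such that y_i a_iᵀθ ≤ 0 for at least one i ∈ [n], then the Normalized LR+GD update θ⁺ := θ − γ β(θ) ∇f(θ) satisfies ‖θ⁺/γ − α θ̂*‖² ≤ ‖θ/γ − α θ̂*‖² − 2αμ + 2 log(2n − 1)/γ + R² = ‖θ/γ − α θ̂*‖² − α μ. -/

import Mathlib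

/-!
The step is `θ⁺/γ = θ/γ + s`, where `s` is the average of the signed samples `yᵢ aᵢ` with
weights `σ(-yᵢ aᵢᵀθ)`. Expanding the square, it suffices that `‖s‖ ≤ R`, `⟨θ̂*, s⟩ ≥ μ` (both
because `s` is a convex combination) and `⟨θ, s⟩ ≤ log(2n − 1)` (Jensen's inequality for `log`).
-/

open scoped RealInnerProductSpace BigOperators

/-- The gradient of the logistic loss `f(θ) = (1/n) Σ_i log(1 + exp(-y_i aᵢᵀθ))`. -/
noncomputable def logisticGrad {d n : ℕ} (a : Fin n → EuclideanSpace ℝ (Fin d))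
    (y : Fin n → ℝ) (θ : EuclideanSpace ℝ (Fin d)) : EuclideanSpace ℝ (Fin d) :=
  -(((1 : ℝ) / n) • ∑ i, ((1 + Real.exp (y i * ⟪a i, θ⟫))⁻¹ * y i) • a i)

/-- The normalization factor `β(θ) = ((1/n) Σ_i (1 + exp(y_i aᵢᵀθ))⁻¹)⁻¹`. -/
noncomputable def logisticBeta {d n : ℕ} (a : Fin n → EuclideanSpace ℝ (Fin d))
    (y : Fin n → ℝ) (θ : EuclideanSpace ℝ (Fin d)) : ℝ :=
  (((1 : ℝ) / n) * ∑ i, (1 + Real.exp (y i * ⟪a i, θ⟫))⁻¹)⁻¹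

open Finset Real

/-- `σ(-t)`: the weight of a sample with margin `t` in the logistic gradient. -/
noncomputable def logisticWeight (t : ℝ) : ℝ := (1 + exp t)⁻¹

lemma logisticWeight_pos (t : ℝ) : 0 < logisticWeight t := by
  unfold logisticWeight; positivity

lemma logisticWeight_mul_exp (t : ℝ) : logisticWeight t * exp t = 1 - logisticWeight t := by
  unfold logisticWeight; field_simp; ring

lemma inv_two_le_logisticWeight {t : ℝ} (ht : t ≤ 0) : 2⁻¹ ≤ logisticWeight t := by
  unfold logisticWeight
  gcongr
  linarith [exp_le_one_iff.2 ht]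

lemma inner_centerMass {ι E : Type*} [NormedAddCommGroup E] [InnerProductSpace ℝ E]
    (t : Finset ι) (w : ι → ℝ) (z : ι → E) (u : E) :
    ⟪u, t.centerMass w z⟫ = t.centerMass w fun i => ⟪u, z i⟫ := by
  simp only [centerMass, inner_smul_right, inner_sum, smul_eq_mul]

/-- Jensen for `log` bounds the weighted mean margin by `log` of the weighted mean of `exp`,
which the identity `σ(-t) eᵗ = 1 - σ(-t)` evaluates as `n / W - 1`; a nonpositive margin
forces the total weight `W ≥ 1/2`. -/
theorem centerMass_logisticWeight_le_log {ι : Type*} [Fintype ι] (z : ι → ℝ)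
    (hz : ∃ j, z j ≤ 0) :
    univ.centerMass (fun i => logisticWeight (z i)) z ≤ log (2 * Fintype.card ι - 1) := by
  obtain ⟨j, hj⟩ := hz
  set w := fun i => logisticWeight (z i)
  set W := ∑ i, w i
  have hW : 2⁻¹ ≤ W := (inv_two_le_logisticWeight hj).trans
    (single_le_sum (fun i _ => (logisticWeight_pos (z i)).le) (mem_univ j))
  have hw₀ : ∀ i ∈ univ, 0 ≤ w i := fun i _ => (logisticWeight_pos (z i)).le
  have hexp_mean : univ.centerMass w (exp ∘ z) = Fintype.card ι / W - 1 := by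
    simp only [centerMass, Function.comp_apply, smul_eq_mul, w, logisticWeight_mul_exp,
      sum_sub_distrib, sum_const, card_univ, nsmul_eq_mul, mul_one]
    change W⁻¹ * (_ - W) = _
    field_simp
  have hjensen := strictConcaveOn_log_Ioi.concaveOn.le_map_centerMass hw₀ (by linarith)
    (p := exp ∘ z) fun i _ => exp_pos (z i)
  have hpos : 0 < univ.centerMass w (exp ∘ z) :=
    (convex_Ioi (0 : ℝ)).centerMass_mem (z := exp ∘ z) hw₀ (by linarith) fun i _ => exp_pos (z i)
  calc univ.centerMass w z = univ.centerMass w (log ∘ exp ∘ z) := by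
        simp only [Function.comp_def, log_exp]
    _ ≤ log (univ.centerMass w (exp ∘ z)) := hjensen
    _ ≤ log (2 * Fintype.card ι - 1) := by
        refine log_le_log hpos ?_
        rw [hexp_mean, div_sub_one (by positivity), div_le_iff₀ (by positivity)]
        nlinarith

lemma norm_add_sub_smul_sq_le {E : Type*} [NormedAddCommGroup E] [InnerProductSpace ℝ E]
    {x u s : E} {α L μ R : ℝ} (hα : 0 ≤ α) (hx : ⟪x, s⟫ ≤ L) (hu : μ ≤ ⟪u, s⟫)
    (hs : ‖s‖ ≤ R) :
    ‖x + s - α • u‖ ^ 2 ≤ ‖x - α • u‖ ^ 2 - 2 * α * μ + 2 * L + R ^ 2 := by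
  have hexpand : ‖x + s - α • u‖ ^ 2 = ‖x - α • u‖ ^ 2 + 2 * (⟪x, s⟫ - α * ⟪u, s⟫) + ‖s‖ ^ 2 := by
    rw [add_sub_right_comm, norm_add_sq_real, inner_sub_left, real_inner_smul_left]
  have hs2 : ‖s‖ ^ 2 ≤ R ^ 2 := pow_le_pow_left₀ (norm_nonneg s) hs 2
  nlinarith [mul_le_mul_of_nonneg_left hu hα]

lemma logisticBeta_smul_logisticGrad {d n : ℕ} (a : Fin n → EuclideanSpace ℝ (Fin d))
    (y : Fin n → ℝ) (θ : EuclideanSpace ℝ (Fin d)) (hn : n ≠ 0) :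
    logisticBeta a y θ • logisticGrad a y θ =
      -univ.centerMass (fun i => logisticWeight (y i * ⟪a i, θ⟫)) fun i => y i • a i := by
  rw [logisticBeta, logisticGrad, centerMass, smul_neg, smul_smul]
  congr 2
  · rw [one_div, mul_inv, inv_inv, mul_right_comm, mul_inv_cancel₀ (Nat.cast_ne_zero.2 hn),
      one_mul]
    rfl
  · refine sum_congr rfl fun i _ => ?_
    rw [smul_smul]
    rfl

theorem normalized_lr_gd_step_decrease_general {d n : ℕ}
    (a : Fin n → EuclideanSpace ℝ (Fin d)) (y : Fin n → ℝ)
    (hy : ∀ i, y i = 1 ∨ y i = -1)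
    (μ R : ℝ) (hμ : 0 < μ)
    (hR : IsGreatest (Set.range fun i => ‖a i‖) R)
    (θstar : EuclideanSpace ℝ (Fin d))
    (hmargin : ∀ i, μ ≤ y i * ⟪a i, θstar⟫)
    (γ : ℝ) (hγ : 0 < γ)
    (θ : EuclideanSpace ℝ (Fin d))
    (hmis : ∃ i, y i * ⟪a i, θ⟫ ≤ 0) :
    ‖γ⁻¹ • (θ - (γ * logisticBeta a y θ) • logisticGrad a y θ)
        - ((2 * Real.log (2 * n - 1) / γ + R ^ 2) / μ) • θstar‖ ^ 2
      ≤ ‖γ⁻¹ • θ - ((2 * Real.log (2 * n - 1) / γ + R ^ 2) / μ) • θstar‖ ^ 2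
        - 2 * ((2 * Real.log (2 * n - 1) / γ + R ^ 2) / μ) * μ
        + 2 * Real.log (2 * n - 1) / γ + R ^ 2 ∧
    ‖γ⁻¹ • θ - ((2 * Real.log (2 * n - 1) / γ + R ^ 2) / μ) • θstar‖ ^ 2
        - 2 * ((2 * Real.log (2 * n - 1) / γ + R ^ 2) / μ) * μ
        + 2 * Real.log (2 * n - 1) / γ + R ^ 2
      = ‖γ⁻¹ • θ - ((2 * Real.log (2 * n - 1) / γ + R ^ 2) / μ) • θstar‖ ^ 2
        - ((2 * Real.log (2 * n - 1) / γ + R ^ 2) / μ) * μ := by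
  obtain ⟨j, hj⟩ := hmis
  have hn : 1 ≤ (n : ℝ) := by exact_mod_cast j.pos
  set w := fun i => logisticWeight (y i * ⟪a i, θ⟫)
  set s := univ.centerMass w fun i => y i • a i
  have hw₀ : ∀ i ∈ univ, 0 ≤ w i := fun i _ => (logisticWeight_pos _).le
  have hW : 0 < ∑ i, w i := sum_pos (fun i _ => logisticWeight_pos _) ⟨j, mem_univ j⟩
  have hstep : γ⁻¹ • (θ - (γ * logisticBeta a y θ) • logisticGrad a y θ) = γ⁻¹ • θ + s := by
    rw [mul_smul, logisticBeta_smul_logisticGrad a y θ j.pos.ne', smul_neg, sub_neg_eq_add,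
      smul_add, inv_smul_smul₀ hγ.ne']
  have hsθ : ⟪γ⁻¹ • θ, s⟫ ≤ log (2 * n - 1) / γ := by
    rw [real_inner_smul_left, inv_mul_le_iff₀ hγ, mul_div_cancel₀ _ hγ.ne', inner_centerMass]
    simp only [real_inner_smul_left, real_inner_comm _ θ]
    simpa only [Fintype.card_fin] using
      centerMass_logisticWeight_le_log (fun i => y i * ⟪a i, θ⟫) ⟨j, hj⟩
  have hsθstar : μ ≤ ⟪θstar, s⟫ :=
    (convex_halfSpace_ge (innerSL ℝ θstar).isLinear μ).centerMass_mem hw₀ hW fun i _ => by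
      simpa [real_inner_smul_right, real_inner_comm θstar] using hmargin i
  have hs : ‖s‖ ≤ R := by
    refine mem_closedBall_zero_iff.1 <|
      (convex_closedBall 0 R).centerMass_mem hw₀ hW fun i _ => mem_closedBall_zero_iff.2 ?_
    rcases hy i with h | h <;> simpa [h] using hR.2 ⟨i, rfl⟩
  have hα : 0 ≤ (2 * log (2 * n - 1) / γ + R ^ 2) / μ := by
    have := log_nonneg (show (1 : ℝ) ≤ 2 * n - 1 by linarith)
    positivity
  refine ⟨?_, by linarith [div_mul_cancel₀ (2 * log (2 * n - 1) / γ + R ^ 2) hμ.ne']⟩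
  rw [hstep]
  simpa only [mul_div_assoc] using norm_add_sub_smul_sq_le hα hsθ hsθstar hs

/-- **One-step decrease for Normalized LR+GD.** With
`α = (2 log(2n − 1)/γ + R²)/μ`, if some sample is misclassified at `θ`, the update
`θ⁺ = θ − γ β(θ) ∇f(θ)` satisfies
`‖θ⁺/γ − α θ̂*‖² ≤ ‖θ/γ − α θ̂*‖² − 2αμ + 2 log(2n − 1)/γ + R² = ‖θ/γ − α θ̂*‖² − αμ`. -/
theorem normalized_lr_gd_step_decrease {d n : ℕ}
    (a : Fin n → EuclideanSpace ℝ (Fin d)) (y : Fin n → ℝ)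
    (hy : ∀ i, y i = 1 ∨ y i = -1)
    (μ R : ℝ) (hμ : 0 < μ)
    (hR : IsGreatest (Set.range fun i => ‖a i‖) R)
    (θstar : EuclideanSpace ℝ (Fin d)) (hstar : ‖θstar‖ = 1)
    (hmargin : ∀ i, μ ≤ y i * ⟪a i, θstar⟫)
    (γ : ℝ) (hγ : 0 < γ)
    (θ : EuclideanSpace ℝ (Fin d))
    (hmis : ∃ i, y i * ⟪a i, θ⟫ ≤ 0) :
    ‖γ⁻¹ • (θ - (γ * logisticBeta a y θ) • logisticGrad a y θ)
        - ((2 * Real.log (2 * n - 1) / γ + R ^ 2) / μ) • θstar‖ ^ 2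
      ≤ ‖γ⁻¹ • θ - ((2 * Real.log (2 * n - 1) / γ + R ^ 2) / μ) • θstar‖ ^ 2
        - 2 * ((2 * Real.log (2 * n - 1) / γ + R ^ 2) / μ) * μ
        + 2 * Real.log (2 * n - 1) / γ + R ^ 2 ∧
    ‖γ⁻¹ • θ - ((2 * Real.log (2 * n - 1) / γ + R ^ 2) / μ) • θstar‖ ^ 2
        - 2 * ((2 * Real.log (2 * n - 1) / γ + R ^ 2) / μ) * μ
        + 2 * Real.log (2 * n - 1) / γ + R ^ 2
      = ‖γ⁻¹ • θ - ((2 * Real.log (2 * n - 1) / γ + R ^ 2) / μ) • θstar‖ ^ 2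
        - ((2 * Real.log (2 * n - 1) / γ + R ^ 2) / μ) * μ :=
  normalized_lr_gd_step_decrease_general a y hy μ R hμ hR θstar hmargin γ hγ θ hmis
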